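/- arXiv:2107.12031 — 8 statements merged into one kernel-verified Lean document; each statement's English description precedes it below -/
import Mathlib

section
/- Let G be a bipartite graph with no 1-dense 4-set, let v be a vertex with four distinct neighbors v1, v2, v3, v4. Then N(v1) ∪ N(v2) ∪ N(v3) ∪ N(v4) is an independent set of size at least (d(v1)+d(v2)+d(v3)+d(v4)) − 3, i.e., of size at least 13 if all four degrees are at least 4. -/
/-- A set `S` of vertices is `k`-sparse if every vertex of `S` has at most `k`
neighbors in `S`. -/
def kSparse {V : Type*} (G : SimpleGraph V) (k : ℕ) (S : Set V) : Prop :=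
  ∀ v ∈ S, {u | u ∈ S ∧ G.Adj v u}.ncard ≤ k

/-- A set `S` of vertices is `k`-dense if every vertex of `S` has at most `k`
non-neighbors in `S` other than itself. -/
def kDense {V : Type*} (G : SimpleGraph V) (k : ℕ) (S : Set V) : Prop :=
  ∀ v ∈ S, {u | u ∈ S ∧ u ≠ v ∧ ¬ G.Adj v u}.ncard ≤ k

/-- A graph is bipartite if its vertex set splits into two independent sets. -/
def IsBipartite {V : Type*} (G : SimpleGraph V) : Prop :=
  ∃ A : Set V, ∀ u v : V, G.Adj u v → (u ∈ A ↔ v ∉ A)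

/-- In a bipartite graph with no 1-dense 4-set, if `v` has four distinct neighbors
`w 0, w 1, w 2, w 3`, then the union of their neighborhoods is an independent set of
size at least the sum of their degrees minus 3; in particular of size at least 13 if
all four degrees are at least 4. -/
theorem stmt8 {V : Type*} [Fintype V] (G : SimpleGraph V) (hbip : IsBipartite G)
    (h : ¬ ∃ S : Set V, kDense G 1 S ∧ S.ncard = 4)
    (v : V) (w : Fin 4 → V) (hinj : Function.Injective w) (hadj : ∀ i, G.Adj v (w i)) :
    (∀ x ∈ ⋃ i, G.neighborSet (w i), ∀ y ∈ ⋃ i, G.neighborSet (w i), ¬ G.Adj x y) ∧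
    (∑ i, (G.neighborSet (w i)).ncard) - 3 ≤ (⋃ i, G.neighborSet (w i)).ncard ∧
    ((∀ i, 4 ≤ (G.neighborSet (w i)).ncard) → 13 ≤ (⋃ i, G.neighborSet (w i)).ncard) := by
  classical
  obtain ⟨A, hA⟩ := hbip
  -- w i and w j are not adjacent
  have hwnadj : ∀ i j : Fin 4, ¬ G.Adj (w i) (w j) := by
    intro i j had
    have h1 := hA v (w i) (hadj i)
    have h2 := hA v (w j) (hadj j)
    have h3 := hA (w i) (w j) had
    tauto
  -- any common neighbor of w i and w j (i ≠ j) equals v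
  have hcom : ∀ i j : Fin 4, i ≠ j → ∀ u : V, G.Adj (w i) u → G.Adj (w j) u → u = v := by
    intro i j hij u hui huj
    by_contra hne
    apply h
    refine ⟨{v, u, w i, w j}, ?_, ?_⟩
    · intro x hx
      have hsub : ∀ y : V, {u' | u' ∈ ({v, u, w i, w j} : Set V) ∧ u' ≠ x ∧ ¬ G.Adj x u'} ⊆ {y} →
          {u' | u' ∈ ({v, u, w i, w j} : Set V) ∧ u' ≠ x ∧ ¬ G.Adj x u'}.ncard ≤ 1 := by
        intro y hy
        calc _ ≤ ({y} : Set V).ncard := Set.ncard_le_ncard hy (Set.finite_singleton y)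
        _ = 1 := Set.ncard_singleton y
      rcases hx with rfl | rfl | rfl | rfl
      · apply hsub u
        rintro z ⟨(rfl | rfl | rfl | rfl), hne', hnadj⟩ <;>
          simp_all [G.adj_symm]
      · apply hsub v
        rintro z ⟨(rfl | rfl | rfl | rfl), hne', hnadj⟩ <;>
          simp_all [G.adj_symm]
      · apply hsub (w j)
        rintro z ⟨(rfl | rfl | rfl | rfl), hne', hnadj⟩ <;>
          simp_all [G.adj_symm]
      · apply hsub (w i)
        rintro z ⟨(rfl | rfl | rfl | rfl), hne', hnadj⟩ <;>
          simp_all [G.adj_symm]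
    · have e1 : v ≠ u := fun e => hne e.symm
      have e2 : v ≠ w i := (hadj i).ne
      have e3 : v ≠ w j := (hadj j).ne
      have e4 : u ≠ w i := fun e => G.irrefl (e ▸ hui)
      have e5 : u ≠ w j := fun e => G.irrefl (e ▸ huj)
      have e6 : w i ≠ w j := fun e => hij (hinj e)
      rw [show ({v, u, w i, w j} : Set V) = ↑({v, u, w i, w j} : Finset V) by simp,
        Set.ncard_coe_finset]
      rw [Finset.card_insert_of_notMem (by simp [e1, e2, e3]),
        Finset.card_insert_of_notMem (by simp [e4, e5]),
        Finset.card_insert_of_notMem (by simp [e6])]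
      simp
  -- independence
  have hind : ∀ x ∈ ⋃ i, G.neighborSet (w i), ∀ y ∈ ⋃ i, G.neighborSet (w i), ¬ G.Adj x y := by
    intro x hx y hy hxy
    simp only [Set.mem_iUnion, SimpleGraph.mem_neighborSet] at hx hy
    obtain ⟨i, hi⟩ := hx
    obtain ⟨j, hj⟩ := hy
    have h1 := hA v (w i) (hadj i)
    have h2 := hA v (w j) (hadj j)
    have h3 := hA (w i) x hi
    have h4 := hA (w j) y hj
    have h5 := hA x y hxy
    tauto
  refine ⟨hind, ?_⟩
  -- counting
  set N : Fin 4 → Finset V := fun i => G.neighborFinset (w i) with hN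
  have hvN : ∀ i, v ∈ N i := fun i => by
    simp [hN, SimpleGraph.mem_neighborFinset, (hadj i).symm]
  have hU : (⋃ i, G.neighborSet (w i)) = ↑(Finset.univ.biUnion N) := by
    ext x
    simp [hN, SimpleGraph.mem_neighborFinset, SimpleGraph.mem_neighborSet]
  have hsplit : Finset.univ.biUnion N = insert v (Finset.univ.biUnion fun i => (N i).erase v) := by
    ext x
    simp only [Finset.mem_biUnion, Finset.mem_univ, true_and, Finset.mem_insert,
      Finset.mem_erase]
    constructor
    · rintro ⟨i, hi⟩
      by_cases hx : x = v
      · exact Or.inl hx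
      · exact Or.inr ⟨i, hx, hi⟩
    · rintro (rfl | ⟨i, _, hi⟩)
      · exact ⟨0, hvN 0⟩
      · exact ⟨i, hi⟩
  have hdisj : ∀ i ∈ (Finset.univ : Finset (Fin 4)), ∀ j ∈ (Finset.univ : Finset (Fin 4)),
      i ≠ j → Disjoint ((N i).erase v) ((N j).erase v) := by
    intro i _ j _ hij
    rw [Finset.disjoint_left]
    intro x hxi hxj
    rw [Finset.mem_erase] at hxi hxj
    exact hxi.1 (hcom i j hij x (by simpa [hN, SimpleGraph.mem_neighborFinset] using hxi.2)
      (by simpa [hN, SimpleGraph.mem_neighborFinset] using hxj.2))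
  have hcard : (Finset.univ.biUnion N).card = 1 + ∑ i, ((N i).card - 1) := by
    rw [hsplit, Finset.card_insert_of_notMem (by simp), Finset.card_biUnion hdisj]
    rw [Finset.sum_congr rfl fun i _ => Finset.card_erase_of_mem (hvN i)]
    omega
  have hncard : ∀ i, (G.neighborSet (w i)).ncard = (N i).card := by
    intro i
    show _ = (G.neighborFinset (w i)).card
    rw [SimpleGraph.neighborFinset_def, Set.ncard_eq_toFinset_card']
  have hone : ∀ i, 1 ≤ (N i).card := fun i => Finset.card_pos.mpr ⟨v, hvN i⟩
  rw [Fin.sum_univ_four] at hcard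
  rw [hU, Set.ncard_coe_finset, hcard, Fin.sum_univ_four,
    hncard 0, hncard 1, hncard 2, hncard 3]
  have h0 := hone 0; have h1 := hone 1; have h2 := hone 2; have h3 := hone 3
  constructor
  · omega
  · intro hd
    have g0 := hd 0; have g1 := hd 1; have g2 := hd 2; have g3 := hd 3
    rw [hncard 0] at g0; rw [hncard 1] at g1; rw [hncard 2] at g2; rw [hncard 3] at g3
    omega
end

section
/- Let G be a class of graphs closed under taking induced subgraphs, and k ≥ 0, m ≥ 2, t ≥ 1 integers such that c_k^G(m−1) + t ≥ R_k^G(t,t). Then c_k^G(m) ≥ c_k^G(m−1) + t; that is, every graph in G on c_k^G(m−1)+t vertices can be partitioned into at most m k-defective sets. -/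
/-- A set is `k`-defective if it is `k`-sparse or `k`-dense. -/
def kDefective {V : Type*} (G : SimpleGraph V) (k : ℕ) (S : Set V) : Prop :=
  kSparse G k S ∨ kDense G k S

lemma kDefective_image {a b : ℕ} (φ : Fin a ↪ Fin b) (G : SimpleGraph (Fin b)) (k : ℕ)
    (T : Set (Fin a)) (h : kDefective (G.comap φ) k T) : kDefective G k (φ '' T) := by
  rcases h with h | h
  · left
    rintro v ⟨w, hw, rfl⟩
    have hset : {u | u ∈ φ '' T ∧ G.Adj (φ w) u}
        = φ '' {u | u ∈ T ∧ (G.comap φ).Adj w u} := by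
      ext u
      constructor
      · rintro ⟨⟨x, hx, rfl⟩, hadj⟩
        exact ⟨x, ⟨hx, hadj⟩, rfl⟩
      · rintro ⟨x, ⟨hx, hadj⟩, rfl⟩
        exact ⟨⟨x, hx, rfl⟩, hadj⟩
    rw [hset, Set.ncard_image_of_injective _ φ.injective]
    exact h w hw
  · right
    rintro v ⟨w, hw, rfl⟩
    have hset : {u | u ∈ φ '' T ∧ u ≠ φ w ∧ ¬ G.Adj (φ w) u}
        = φ '' {u | u ∈ T ∧ u ≠ w ∧ ¬ (G.comap φ).Adj w u} := by
      ext u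
      constructor
      · rintro ⟨⟨x, hx, rfl⟩, hne, hadj⟩
        exact ⟨x, ⟨hx, fun h' => hne (by rw [h']), hadj⟩, rfl⟩
      · rintro ⟨x, ⟨hx, hne, hadj⟩, rfl⟩
        exact ⟨⟨x, hx, rfl⟩, fun h' => hne (φ.injective h'), hadj⟩
    rw [hset, Set.ncard_image_of_injective _ φ.injective]
    exact h w hw

/-- Lower bound for defective cocoloring: if `𝒢` is closed under induced subgraphs,
every graph of `𝒢` on `c` vertices can be partitioned into at most `m-1` `k`-defective
sets, and every graph of `𝒢` on `c + t` vertices contains a `k`-defective `t`-set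
(i.e. `c + t ≥ R_k^𝒢(t,t)`), then every graph of `𝒢` on `c + t` vertices can be
partitioned into at most `m` `k`-defective sets (i.e. `c_k^𝒢(m) ≥ c_k^𝒢(m-1) + t`). -/
theorem stmt11 (k : ℕ) (m : ℕ) (hm : 2 ≤ m) (t : ℕ) (ht : 1 ≤ t) (c : ℕ)
    (𝒢 : ∀ n : ℕ, SimpleGraph (Fin n) → Prop)
    (hClosed : ∀ (a b : ℕ) (φ : Fin a ↪ Fin b) (G : SimpleGraph (Fin b)),
      𝒢 b G → 𝒢 a (G.comap φ))
    (hC : ∀ G : SimpleGraph (Fin c), 𝒢 c G →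
      ∃ f : Fin c → Fin (m - 1), ∀ i, kDefective G k {v | f v = i})
    (hR : ∀ G : SimpleGraph (Fin (c + t)), 𝒢 (c + t) G →
      ∃ S : Set (Fin (c + t)), kDefective G k S ∧ S.ncard = t) :
    ∀ G : SimpleGraph (Fin (c + t)), 𝒢 (c + t) G →
      ∃ f : Fin (c + t) → Fin m, ∀ i, kDefective G k {v | f v = i} := by
  classical
  intro G hG
  obtain ⟨S, hSdef, hScard⟩ := hR G hG
  have hcompl : Nat.card ↥(Sᶜ) = c := by
    rw [Nat.card_coe_set_eq]
    have h1 := Set.ncard_add_ncard_compl S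
    simp only [Set.ncard_univ, Nat.card_eq_fintype_card, Fintype.card_fin] at h1
    omega
  have e : ↥(Sᶜ) ≃ Fin c := Finite.equivFinOfCardEq hcompl
  let φ : Fin c ↪ Fin (c + t) :=
    e.symm.toEmbedding.trans (Function.Embedding.subtype _)
  have hφ : ∀ x, (φ x : Fin (c + t)) = ↑(e.symm x) := fun x => rfl
  have hφmem : ∀ x, φ x ∉ S := fun x => (e.symm x).2
  obtain ⟨f', hf'⟩ := hC (G.comap φ) (hClosed c (c + t) φ G hG)
  refine ⟨fun v => if h : v ∈ S then ⟨m - 1, by omega⟩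
    else Fin.castLE (by omega) (f' (e ⟨v, h⟩)), fun i => ?_⟩
  by_cases hi : (i : ℕ) = m - 1
  · have : {v | (if h : v ∈ S then (⟨m - 1, by omega⟩ : Fin m)
        else Fin.castLE (by omega) (f' (e ⟨v, h⟩))) = i} = S := by
      ext v
      simp only [Set.mem_setOf_eq]
      by_cases hv : v ∈ S
      · simp only [dif_pos hv]
        exact ⟨fun _ => hv, fun _ => Fin.ext hi.symm⟩
      · simp only [dif_neg hv]
        constructor
        · intro h'
          have := congrArg Fin.val h'
          simp only [Fin.coe_castLE] at this
          have hlt := (f' (e ⟨v, hv⟩)).isLt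
          omega
        · intro h'; exact absurd h' hv
    rw [this]; exact hSdef
  · have hi' : (i : ℕ) < m - 1 := by have := i.isLt; omega
    have : {v | (if h : v ∈ S then (⟨m - 1, by omega⟩ : Fin m)
        else Fin.castLE (by omega) (f' (e ⟨v, h⟩))) = i}
        = φ '' {w | f' w = ⟨i, hi'⟩} := by
      ext v
      simp only [Set.mem_setOf_eq, Set.mem_image]
      constructor
      · intro h'
        by_cases hv : v ∈ S
        · rw [dif_pos hv] at h'
          have := congrArg Fin.val h'
          simp at this
          omega
        · rw [dif_neg hv] at h'
          refine ⟨e ⟨v, hv⟩, ?_, ?_⟩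
          · apply Fin.ext
            have := congrArg Fin.val h'
            simpa using this
          · rw [hφ]; simp
      · rintro ⟨w, hw, rfl⟩
        rw [dif_neg (hφmem w)]
        apply Fin.ext
        have : e ⟨φ w, hφmem w⟩ = w := by
          rw [show (⟨φ w, hφmem w⟩ : ↥(Sᶜ)) = e.symm w from Subtype.ext (hφ w).symm]
          simp
        rw [this, hw]
        simp
    rw [this]
    exact kDefective_image φ G k _ (hf' ⟨i, hi'⟩)
end

section
/- Let G be a class of graphs closed under taking disjoint union with any complete graph. Then for all k ≥ 0 and m ≥ 2, c_k^G(m) ≤ c_k^G(m−1) + m(k+1) + 1. Concretely, if H ∈ G on 1 + c_k^G(m−1) vertices cannot be partitioned into m−1 k-defective sets, then the disjoint union of H with the complete graph K_{1+m(k+1)} cannot be partitioned into m k-defective sets. -/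
lemma restrict_defective {V W : Type*} [Fintype V] [Fintype W]
    {H : SimpleGraph V} {K : SimpleGraph W} {k : ℕ} {S : Set (V ⊕ W)}
    (h : kDefective (H ⊕g K) k S) : kDefective H k (Sum.inl ⁻¹' S) := by
  rcases h with h | h
  · left
    intro v hv
    have hsub : Sum.inl '' {u | u ∈ Sum.inl ⁻¹' S ∧ H.Adj v u} ⊆
        {u | u ∈ S ∧ (H ⊕g K).Adj (Sum.inl v) u} := by
      rintro _ ⟨u, ⟨hu1, hu2⟩, rfl⟩
      exact ⟨hu1, by simpa using hu2⟩
    calc {u | u ∈ Sum.inl ⁻¹' S ∧ H.Adj v u}.ncard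
        = (Sum.inl '' {u | u ∈ Sum.inl ⁻¹' S ∧ H.Adj v u}).ncard :=
          (Set.ncard_image_of_injective _ Sum.inl_injective).symm
      _ ≤ {u | u ∈ S ∧ (H ⊕g K).Adj (Sum.inl v) u}.ncard :=
          Set.ncard_le_ncard hsub (Set.toFinite _)
      _ ≤ k := h _ hv
  · right
    intro v hv
    have hsub : Sum.inl '' {u | u ∈ Sum.inl ⁻¹' S ∧ u ≠ v ∧ ¬ H.Adj v u} ⊆
        {u | u ∈ S ∧ u ≠ Sum.inl v ∧ ¬ (H ⊕g K).Adj (Sum.inl v) u} := by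
      rintro _ ⟨u, ⟨hu1, hu2, hu3⟩, rfl⟩
      exact ⟨hu1, by simpa using hu2, by simpa using hu3⟩
    calc {u | u ∈ Sum.inl ⁻¹' S ∧ u ≠ v ∧ ¬ H.Adj v u}.ncard
        = (Sum.inl '' {u | u ∈ Sum.inl ⁻¹' S ∧ u ≠ v ∧ ¬ H.Adj v u}).ncard :=
          (Set.ncard_image_of_injective _ Sum.inl_injective).symm
      _ ≤ {u | u ∈ S ∧ u ≠ Sum.inl v ∧ ¬ (H ⊕g K).Adj (Sum.inl v) u}.ncard :=
          Set.ncard_le_ncard hsub (Set.toFinite _)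
      _ ≤ k := h _ hv

/-- Upper bound for defective cocoloring: if a graph `H` on `1 + c` vertices cannot be
partitioned into `m - 1` `k`-defective sets, then the disjoint union of `H` with the
complete graph on `1 + m(k+1)` vertices cannot be partitioned into `m` `k`-defective
sets.  (Hence `c_k^𝒢(m) ≤ c_k^𝒢(m-1) + m(k+1) + 1` for classes closed under disjoint
union with complete graphs.) -/
theorem stmt12 {V : Type*} [Fintype V] (k m c : ℕ) (hm : 2 ≤ m)
    (H : SimpleGraph V) (hcard : Fintype.card V = 1 + c)
    (hH : ¬ ∃ f : V → Fin (m - 1), ∀ i, kDefective H k {v | f v = i}) :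
    ¬ ∃ f : V ⊕ Fin (1 + m * (k + 1)) → Fin m,
      ∀ i, kDefective (H ⊕g (⊤ : SimpleGraph (Fin (1 + m * (k + 1))))) k
        {v | f v = i} := by
  rintro ⟨f, hf⟩
  obtain ⟨i, hi⟩ := Fintype.exists_lt_card_fiber_of_mul_lt_card
    (fun x : Fin (1 + m * (k + 1)) => f (Sum.inr x)) (n := k + 1)
    (by simp only [Fintype.card_fin]; omega)
  set F : Finset (Fin (1 + m * (k + 1))) :=
    Finset.univ.filter (fun x => f (Sum.inr x) = i) with hFdef
  have hFcard : k + 1 < F.card := hi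
  obtain ⟨x, hx⟩ := Finset.card_pos.mp (by omega : 0 < F.card)
  have hxmem : f (Sum.inr x) = i := (Finset.mem_filter.mp hx).2
  -- class i is not k-sparse
  have hdense : kDense (H ⊕g (⊤ : SimpleGraph (Fin (1 + m * (k + 1))))) k
      {v | f v = i} := by
    rcases hf i with hs | hd
    · exfalso
      have hvS : Sum.inr x ∈ {v | f v = i} := hxmem
      have hsub : Sum.inr '' (↑(F.erase x) : Set (Fin (1 + m * (k + 1)))) ⊆
          {u | u ∈ {v | f v = i} ∧
            (H ⊕g (⊤ : SimpleGraph (Fin (1 + m * (k + 1))))).Adj (Sum.inr x) u} := by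
        rintro _ ⟨y, hy, rfl⟩
        have hy' := Finset.mem_erase.mp hy
        refine ⟨(Finset.mem_filter.mp hy'.2).2, ?_⟩
        simp [hy'.1.symm, Ne.symm hy'.1]
      have hle := hs _ hvS
      have : k + 1 ≤ {u | u ∈ {v | f v = i} ∧
            (H ⊕g (⊤ : SimpleGraph (Fin (1 + m * (k + 1))))).Adj (Sum.inr x) u}.ncard := by
        calc k + 1 ≤ (F.erase x).card := by
              rw [Finset.card_erase_of_mem hx]; omega
          _ = (Sum.inr '' (↑(F.erase x) : Set (Fin (1 + m * (k + 1))))).ncard := by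
              rw [Set.ncard_image_of_injective _ Sum.inr_injective, Set.ncard_coe_finset]
          _ ≤ _ := Set.ncard_le_ncard hsub (Set.toFinite _)
      omega
    · exact hd
  -- no V-vertex is in class i
  have hne : ∀ w : V, f (Sum.inl w) ≠ i := by
    intro w hw
    have hle := hdense (Sum.inl w) hw
    have hsub : Sum.inr '' (↑F : Set (Fin (1 + m * (k + 1)))) ⊆
        {u | u ∈ {v | f v = i} ∧ u ≠ Sum.inl w ∧
          ¬ (H ⊕g (⊤ : SimpleGraph (Fin (1 + m * (k + 1))))).Adj (Sum.inl w) u} := by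
      rintro _ ⟨y, hy, rfl⟩
      exact ⟨(Finset.mem_filter.mp hy).2, by simp, by simp⟩
    have : k + 1 < {u | u ∈ {v | f v = i} ∧ u ≠ Sum.inl w ∧
          ¬ (H ⊕g (⊤ : SimpleGraph (Fin (1 + m * (k + 1))))).Adj (Sum.inl w) u}.ncard := by
      calc k + 1 < F.card := hFcard
        _ = (Sum.inr '' (↑F : Set (Fin (1 + m * (k + 1))))).ncard := by
            rw [Set.ncard_image_of_injective _ Sum.inr_injective, Set.ncard_coe_finset]
        _ ≤ _ := Set.ncard_le_ncard hsub (Set.toFinite _)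
    omega
  -- build a coloring of V with m - 1 colors
  have hmn : m = (m - 1) + 1 := by omega
  let e : Fin m ≃ Fin ((m - 1) + 1) := finCongr hmn
  let e2 : Fin ((m - 1) + 1) ≃ Option (Fin (m - 1)) := finSuccEquiv' (e i)
  have hsome : ∀ v : V, (e2 (e (f (Sum.inl v)))).isSome := by
    intro v
    rw [Option.isSome_iff_ne_none]
    intro hnone
    have : e (f (Sum.inl v)) = e i := by
      have := congrArg e2.symm hnone
      rwa [Equiv.symm_apply_apply, finSuccEquiv'_symm_none] at this
    exact hne v (e.injective this)
  let g : V → Fin (m - 1) := fun v => (e2 (e (f (Sum.inl v)))).get (hsome v)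
  apply hH
  refine ⟨g, fun j => ?_⟩
  have hset : {v | g v = j} = Sum.inl ⁻¹' {u | f u = e.symm (e2.symm (some j))} := by
    ext v
    simp only [Set.mem_setOf_eq, Set.mem_preimage, g]
    constructor
    · intro h
      have : e2 (e (f (Sum.inl v))) = some j := by
        rw [← h, Option.some_get]
      have := congrArg e2.symm this
      rw [Equiv.symm_apply_apply] at this
      rw [← this, Equiv.symm_apply_apply]
    · intro h
      have : e2 (e (f (Sum.inl v))) = some j := by
        rw [h, Equiv.apply_symm_apply, Equiv.apply_symm_apply]
      simp [this]
  rw [hset]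
  exact restrict_defective (hf _)
end

section
/- Let H be a graph, K a complete graph on 1 + m(k+1) vertices disjoint from H, and let G be their disjoint union. Suppose the vertex set of G is partitioned into m k-defective sets. Then some part S contains at least k+2 vertices of K; any such part S is k-dense and contains no vertex of H; consequently the vertices of H are covered by at most m−1 of the parts. -/
/-- Let `G` be the disjoint union of a graph `H` with the complete graph `K` on
`1 + m(k+1)` vertices, and suppose the vertex set of `G` is partitioned into `m`
`k`-defective sets.  Then some part contains at least `k+2` vertices of `K`; every
such part is `k`-dense and avoids `H`; consequently the vertices of `H` are covered
by at most `m-1` parts. -/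
theorem stmt13 {V : Type*} [Fintype V] (k m : ℕ) (hm : 1 ≤ m)
    (H : SimpleGraph V)
    (f : V ⊕ Fin (1 + m * (k + 1)) → Fin m)
    (hf : ∀ i, kDefective (H ⊕g (⊤ : SimpleGraph (Fin (1 + m * (k + 1))))) k
      {v | f v = i}) :
    (∃ i, k + 2 ≤ {w : Fin (1 + m * (k + 1)) | f (Sum.inr w) = i}.ncard) ∧
    (∀ i, k + 2 ≤ {w : Fin (1 + m * (k + 1)) | f (Sum.inr w) = i}.ncard →
      kDense (H ⊕g (⊤ : SimpleGraph (Fin (1 + m * (k + 1))))) k {v | f v = i} ∧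
      ∀ v : V, f (Sum.inl v) ≠ i) ∧
    (∃ i, ∀ v : V, f (Sum.inl v) ≠ i) := by
  classical
  set G := H ⊕g (⊤ : SimpleGraph (Fin (1 + m * (k + 1)))) with hG
  -- Step 1: pigeonhole
  have step1 : ∃ i, k + 2 ≤ {w : Fin (1 + m * (k + 1)) | f (Sum.inr w) = i}.ncard := by
    by_contra hcon
    push_neg at hcon
    have hle : ∀ i, {w : Fin (1 + m * (k + 1)) | f (Sum.inr w) = i}.ncard ≤ k + 1 := fun i =>
      Nat.lt_succ_iff.mp (by simpa [Nat.lt_succ_iff] using hcon i)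
    have hsum : (Finset.univ : Finset (Fin (1 + m * (k + 1)))).card =
        ∑ i : Fin m, (Finset.univ.filter (fun w : Fin (1 + m * (k + 1)) => f (Sum.inr w) = i)).card := by
      exact Finset.card_eq_sum_card_fiberwise (fun w _ => Finset.mem_univ _)
    have hcard : ∀ i, (Finset.univ.filter (fun w : Fin (1 + m * (k + 1)) => f (Sum.inr w) = i)).card
        = {w : Fin (1 + m * (k + 1)) | f (Sum.inr w) = i}.ncard := by
      intro i
      rw [Set.ncard_eq_toFinset_card']
      congr 1
      ext w
      simp
    have : 1 + m * (k + 1) ≤ m * (k + 1) := by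
      calc 1 + m * (k + 1) = (Finset.univ : Finset (Fin (1 + m * (k + 1)))).card := by simp
      _ = ∑ i : Fin m, (Finset.univ.filter (fun w : Fin (1 + m * (k + 1)) => f (Sum.inr w) = i)).card := hsum
      _ ≤ ∑ _i : Fin m, (k + 1) := Finset.sum_le_sum (fun i _ => by rw [hcard i]; exact hle i)
      _ = m * (k + 1) := by simp [Finset.sum_const, mul_comm]
    omega
  -- Step 2
  have step2 : ∀ i, k + 2 ≤ {w : Fin (1 + m * (k + 1)) | f (Sum.inr w) = i}.ncard →
      kDense G k {v | f v = i} ∧ ∀ v : V, f (Sum.inl v) ≠ i := by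
    intro i hi
    set S : Set (Fin (1 + m * (k + 1))) := {w : Fin (1 + m * (k + 1)) | f (Sum.inr w) = i} with hS
    have hSne : S.Nonempty := Set.nonempty_of_ncard_ne_zero (by omega)
    obtain ⟨w, hw⟩ := hSne
    have hdense : kDense G k {v | f v = i} := by
      rcases hf i with hsp | hd
      · exfalso
        have hsub : Sum.inr '' (S \ {w}) ⊆ {u | u ∈ {v | f v = i} ∧ G.Adj (Sum.inr w) u} := by
          rintro _ ⟨u, ⟨hu, hne⟩, rfl⟩
          refine ⟨hu, ?_⟩
          simp only [hG, SimpleGraph.sum_adj, SimpleGraph.top_adj]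
          simp at hne ⊢
          exact fun e => hne e.symm
        have h1 : k + 1 ≤ (Sum.inr '' (S \ {w}) : Set (V ⊕ Fin (1 + m * (k + 1)))).ncard := by
          rw [Set.ncard_image_of_injective _ Sum.inr_injective,
            Set.ncard_diff (Set.singleton_subset_iff.mpr hw),
            Set.ncard_singleton]
          omega
        have h2 := Set.ncard_le_ncard hsub (Set.toFinite _)
        have h3 := hsp (Sum.inr w) hw
        have h4 : k + 1 ≤ k := le_trans h1 (le_trans h2 h3)
        omega
      · exact hd
    refine ⟨hdense, fun v hv => ?_⟩
    have hsub : Sum.inr '' S ⊆ {u | u ∈ {x | f x = i} ∧ u ≠ Sum.inl v ∧ ¬ G.Adj (Sum.inl v) u} := by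
      rintro _ ⟨u, hu, rfl⟩
      exact ⟨hu, by simp, by simp [hG]⟩
    have h2 := Set.ncard_le_ncard hsub (Set.toFinite _)
    rw [Set.ncard_image_of_injective _ Sum.inr_injective] at h2
    have h3 := hdense (Sum.inl v) hv
    have h4 : k + 2 ≤ k := le_trans hi (le_trans h2 h3)
    omega
  refine ⟨step1, step2, ?_⟩
  obtain ⟨i, hi⟩ := step1
  exact ⟨i, (step2 i hi).2⟩
end

section
/- For every m ≥ 1, the disjoint union of complete graphs K_1, K_2, …, K_{m+1} (which has m(m+3)/2 + 1 vertices and is a perfect graph) cannot have its vertex set partitioned into at most m parts each of which is a clique or an independent set. -/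
/-- A graph is perfect if every induced subgraph has chromatic number equal to its
clique number. -/
def IsPerfect {V : Type*} (G : SimpleGraph V) : Prop :=
  ∀ S : Set V, (G.induce S).chromaticNumber = ((G.induce S).cliqueNum : ℕ∞)

/-- The disjoint union of the complete graphs `K_1, K_2, …, K_{m+1}`. -/
def multiK (m : ℕ) : SimpleGraph ((i : Fin (m + 1)) × Fin (i.1 + 1)) where
  Adj a b := a.1 = b.1 ∧ a ≠ b
  symm := ⟨fun _ _ ⟨h1, h2⟩ => ⟨h1.symm, fun h => h2 h.symm⟩⟩
  loopless := ⟨fun _ ⟨_, h⟩ => h rfl⟩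

/-!
Each colour class that is a clique lies inside a single component `K_{i+1}`, so if `c` of the
`k` colours are clique colours, at most `c` components meet a clique colour. Every other
component is coloured injectively by the `k - c` independent colours, so it has index
`i < k - c`. Counting the `m + 1` components gives `m + 1 ≤ c + (k - c) = k`.

Perfectness holds because every induced subgraph is again a disjoint union of cliques, which can
be coloured by numbering each clique separately.
-/

open Finset

namespace SimpleGraph

theorem chromaticNumber_eq_cliqueNum_of_adj_iff {V β : Type*} [Finite V] {G : SimpleGraph V}
    (k : V → β) (hG : ∀ u v, G.Adj u v ↔ k u = k v ∧ u ≠ v) :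
    G.chromaticNumber = G.cliqueNum := by
  classical
  have := Fintype.ofFinite V
  have hclass : ∀ b, Nonempty ({v // k v = b} ↪ Fin G.cliqueNum) := by
    intro b
    have hclique : G.IsClique (univ.filter (k · = b) : Finset V) := by
      intro u hu v hv huv
      simp only [coe_filter, mem_univ, true_and, Set.mem_ofPred_eq] at hu hv
      exact (hG u v).2 ⟨hu.trans hv.symm, huv⟩
    have hcard : Fintype.card {v // k v = b} ≤ G.cliqueNum := by
      rw [Fintype.card_subtype]
      exact IsClique.card_le_cliqueNum (tc := hclique)
    exact ⟨(Fintype.equivFin _).toEmbedding.trans (Fin.castLEEmb hcard)⟩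
  let e b := (hclass b).some
  let c : V → Fin G.cliqueNum := fun v => e (k v) ⟨v, rfl⟩
  have hc : ∀ b v (hv : k v = b), c v = e b ⟨v, hv⟩ := by
    rintro _ v rfl
    rfl
  have hcol : G.Colorable G.cliqueNum := by
    refine ⟨Coloring.mk c fun {u v} huv hcuv => ?_⟩
    obtain ⟨hk, hne⟩ := (hG u v).1 huv
    rw [hc _ u rfl, hc _ v hk.symm] at hcuv
    exact hne (congrArg Subtype.val ((e _).injective hcuv))
  exact le_antisymm hcol.chromaticNumber_le G.cliqueNum_le_chromaticNumber

theorem injective_comp_of_forall_isIndepSet {V ι α : Type*} {G : SimpleGraph V}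
    (φ : (⊤ : SimpleGraph ι) ↪g G) (f : V → α) (hf : ∀ i, G.IsIndepSet {v | f v = f (φ i)}) :
    (f ∘ φ).Injective := by
  intro i j hij
  by_contra hne
  exact hf i rfl hij.symm (φ.injective.ne hne) (φ.map_adj_iff.2 hne)

end SimpleGraph

theorem Fintype.card_sigma_fin_succ (n : ℕ) :
    Fintype.card ((i : Fin n) × Fin (i.1 + 1)) * 2 = n * (n + 1) := by
  have h := Finset.sum_range_id_mul_two (n + 1)
  rw [Finset.sum_range_succ', add_zero, Nat.add_sub_cancel] at h
  simpa [Fintype.card_sigma, Fin.sum_univ_eq_sum_range (· + 1), mul_comm n] using h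

theorem isPerfect_multiK (m : ℕ) : IsPerfect (multiK m) := fun S =>
  SimpleGraph.chromaticNumber_eq_cliqueNum_of_adj_iff (fun v : S => v.1.1) fun u v => by
    simp [multiK, Subtype.ext_iff]

namespace multiK

def componentEmbedding {m : ℕ} (i : Fin (m + 1)) :
    (⊤ : SimpleGraph (Fin (i.1 + 1))) ↪g multiK m where
  toFun j := ⟨i, j⟩
  inj' _ _ := by simp
  map_rel_iff' := by simp [multiK]; exact fun _ => rfl

theorem fst_eq_of_isClique {m : ℕ} {s : Set ((i : Fin (m + 1)) × Fin (i.1 + 1))}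
    (hs : (multiK m).IsClique s) {x y : (i : Fin (m + 1)) × Fin (i.1 + 1)} (hx : x ∈ s)
    (hy : y ∈ s) : x.1 = y.1 := by
  obtain rfl | hne := eq_or_ne x y
  · rfl
  · exact (hs hx hy hne).1

theorem lt_of_forall_isClique_or_isIndepSet {m k : ℕ}
    (f : ((i : Fin (m + 1)) × Fin (i.1 + 1)) → Fin k)
    (hf : ∀ c, (multiK m).IsClique {v | f v = c} ∨ (multiK m).IsIndepSet {v | f v = c}) :
    m < k := by
  classical
  set C := univ.filter fun c => (multiK m).IsClique {v | f v = c}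
  set meetsC : Fin (m + 1) → Prop := fun i => ∃ j, f ⟨i, j⟩ ∈ C
  have hmeets : #(univ.filter meetsC) ≤ #C :=
    card_le_card_of_forall_subsingleton (fun i c => ∃ j, f ⟨i, j⟩ = c)
      (fun i hi => by obtain ⟨j, hj⟩ := (mem_filter.1 hi).2; exact ⟨_, hj, j, rfl⟩)
      (fun c hc i ⟨_, j, hj⟩ i' ⟨_, j', hj'⟩ =>
        fst_eq_of_isClique (mem_filter.1 hc).2 (x := ⟨i, j⟩) (y := ⟨i', j'⟩) hj hj')
  have hsmall : ∀ i, ¬ meetsC i → i.1 < k - #C := by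
    intro i hi
    have hinj := SimpleGraph.injective_comp_of_forall_isIndepSet (componentEmbedding i) f
      fun j => (hf _).resolve_left fun h => hi ⟨j, mem_filter.2 ⟨mem_univ _, h⟩⟩
    have := card_le_card_of_injOn (f ∘ componentEmbedding i) (s := univ) (t := univ \ C)
      (fun j _ => mem_sdiff.2 ⟨mem_univ _, fun h => hi ⟨j, h⟩⟩) hinj.injOn
    simpa [card_univ_sdiff] using this
  have hrest : #(univ.filter (¬ meetsC ·)) ≤ k - #C :=
    (card_le_card_of_injOn Fin.val (fun i hi => mem_range.2 (hsmall i (mem_filter.1 hi).2))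
      Fin.val_injective.injOn).trans_eq (card_range _)
  have hsplit := card_filter_add_card_filter_not (s := univ) meetsC
  have hC : #C ≤ k := (card_le_univ C).trans_eq (Fintype.card_fin k)
  rw [card_univ, Fintype.card_fin] at hsplit
  omega

end multiK

theorem stmt14_general (m : ℕ) :
    Fintype.card ((i : Fin (m + 1)) × Fin (i.1 + 1)) = m * (m + 3) / 2 + 1 ∧
    IsPerfect (multiK m) ∧
    ¬ ∃ f : ((i : Fin (m + 1)) × Fin (i.1 + 1)) → Fin m,
      ∀ c, (multiK m).IsClique {v | f v = c} ∨
        (∀ x ∈ {v | f v = c}, ∀ y ∈ {v | f v = c}, ¬ (multiK m).Adj x y) := by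
  refine ⟨?_, isPerfect_multiK m, ?_⟩
  · have hcard := Fintype.card_sigma_fin_succ (m + 1)
    have : (m + 1) * (m + 1 + 1) = m * (m + 3) + 2 := by ring
    omega
  · rintro ⟨f, hf⟩
    exact (multiK.lt_of_forall_isClique_or_isIndepSet f fun c =>
      (hf c).imp_right fun h x hx y hy _ => h x hx y hy).false

/-- For every `m ≥ 1`, the disjoint union of `K_1, …, K_{m+1}` is a perfect graph on
`m(m+3)/2 + 1` vertices whose vertex set cannot be partitioned into at most `m` parts
each of which is a clique or an independent set. -/
theorem stmt14 (m : ℕ) (hm : 1 ≤ m) :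
    Fintype.card ((i : Fin (m + 1)) × Fin (i.1 + 1)) = m * (m + 3) / 2 + 1 ∧
    IsPerfect (multiK m) ∧
    ¬ ∃ f : ((i : Fin (m + 1)) × Fin (i.1 + 1)) → Fin m,
      ∀ c, (multiK m).IsClique {v | f v = c} ∨
        (∀ x ∈ {v | f v = c}, ∀ y ∈ {v | f v = c}, ¬ (multiK m).Adj x y) :=
  stmt14_general m
end

section
/- For every m ≥ 1, every perfect graph on m(m+3)/2 vertices admits a partition of its vertex set into at most m parts, each of which is a clique or an independent set. (Proof sketch: by induction on m; if the chromatic number is at most m we are done using color classes as independent sets; otherwise perfection gives a clique of size at least m+1, which is removed as one part.) -/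
open SimpleGraph

namespace SimpleGraph

variable {V W : Type*} {G : SimpleGraph V} {H : SimpleGraph W}

theorem cliqueNum_le_of_embedding [Finite W] (f : G ↪g H) : G.cliqueNum ≤ H.cliqueNum := by
  classical
  obtain ⟨s, hs⟩ := G.exists_isNClique_cliqueNum
  have hclique : H.IsClique (s.map f.toEmbedding : Set W) := by
    rw [Finset.coe_map]
    exact f.injective.injOn.pairwise_image.mpr fun x hx y hy hne =>
      f.map_adj_iff.mpr (hs.1 hx hy hne)
  calc G.cliqueNum = (s.map f.toEmbedding).card := by rw [Finset.card_map, hs.card_eq]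
    _ ≤ H.cliqueNum := hclique.card_le_cliqueNum

theorem cliqueNum_congr [Finite W] (f : G ≃g H) : G.cliqueNum = H.cliqueNum :=
  have : Finite V := .of_equiv W f.symm.toEquiv
  le_antisymm (cliqueNum_le_of_embedding f.toEmbedding)
    (cliqueNum_le_of_embedding f.symm.toEmbedding)

end SimpleGraph

section Perfect

variable {V W : Type*} {G : SimpleGraph V} {H : SimpleGraph W}

theorem IsPerfect.of_embedding [Finite V] (hG : IsPerfect G) (f : H ↪g G) : IsPerfect H := by
  intro S
  let e := (f.comp (Embedding.induce S)).isoInduceRange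
  rw [chromaticNumber_congr e, cliqueNum_congr e]
  exact hG _

theorem IsPerfect.induce [Finite V] (hG : IsPerfect G) (s : Set V) : IsPerfect (G.induce s) :=
  hG.of_embedding (Embedding.induce s)

theorem IsPerfect.chromaticNumber_eq_cliqueNum [Finite V] (hG : IsPerfect G) :
    G.chromaticNumber = G.cliqueNum := by
  rw [chromaticNumber_congr (induceUnivIso G).symm, cliqueNum_congr (induceUnivIso G).symm]
  exact hG Set.univ

theorem IsPerfect.exists_isNClique_of_not_colorable [Finite V] (hG : IsPerfect G) {n : ℕ}
    (hn : ¬G.Colorable n) : ∃ s, G.IsNClique (n + 1) s := by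
  by_contra hfree
  have hlt : n < G.cliqueNum := by
    rw [← chromaticNumber_le_iff_colorable, not_le, hG.chromaticNumber_eq_cliqueNum] at hn
    exact_mod_cast hn
  obtain ⟨s, hs⟩ := G.exists_isNClique_cliqueNum
  exact CliqueFree.mono hlt (not_exists.mp hfree) s hs

end Perfect

section Cocoloring

variable {V α β : Type*} {G : SimpleGraph V}

def IsCocoloring (G : SimpleGraph V) (f : V → α) : Prop :=
  ∀ c, G.IsClique {v | f v = c} ∨ G.IsIndepSet {v | f v = c}

theorem SimpleGraph.Coloring.isCocoloring (C : G.Coloring α) : IsCocoloring G C :=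
  fun _ => .inr fun _ hx _ hy _ hadj => C.valid hadj (hx.trans hy.symm)

theorem IsCocoloring.comp_equiv {f : V → α} (hf : IsCocoloring G f) (e : α ≃ β) :
    IsCocoloring G (e ∘ f) := by
  intro c
  simpa only [Function.comp_apply, ← e.eq_symm_apply] using hf (e.symm c)

theorem IsCocoloring.extend_isClique {K : Set V} [DecidablePred (· ∈ K)] (hK : G.IsClique K)
    {f : ↥Kᶜ → α} (hf : IsCocoloring (G.induce Kᶜ) f) :
    IsCocoloring G fun v => if h : v ∈ K then none else some (f ⟨v, h⟩) := by
  rintro (_ | c)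
  · left
    convert hK using 1
    ext v
    by_cases hv : v ∈ K <;> simp [hv]
  · have hclass : {v | (if h : v ∈ K then none else some (f ⟨v, h⟩)) = some c} =
        Subtype.val '' {x | f x = c} := by
      ext v
      by_cases hv : v ∈ K <;> simp [hv]
    rw [hclass]
    exact (hf c).imp (Subtype.val_injective.injOn.pairwise_image.mpr)
      (Subtype.val_injective.injOn.pairwise_image.mpr)

end Cocoloring

theorem IsPerfect.exists_isCocoloring {V : Type*} [Finite V] {G : SimpleGraph V}
    (hG : IsPerfect G) (m : ℕ) (hcard : Nat.card V ≤ m * (m + 3) / 2) :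
    ∃ f : V → Fin m, IsCocoloring G f := by
  classical
  induction m generalizing V with
  | zero =>
    have : IsEmpty V := Finite.card_eq_zero_iff.mp (Nat.le_zero.mp hcard)
    exact ⟨isEmptyElim, isEmptyElim⟩
  | succ m ih =>
    by_cases hcol : G.Colorable (m + 1)
    · exact ⟨hcol.some, hcol.some.isCocoloring⟩
    obtain ⟨K, hK⟩ := hG.exists_isNClique_of_not_colorable hcol
    have hstep : (m + 1) * (m + 1 + 3) / 2 = m * (m + 3) / 2 + (m + 2) := by
      rw [show (m + 1) * (m + 1 + 3) = m * (m + 3) + (m + 2) * 2 by ring,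
        Nat.add_mul_div_right _ _ two_pos]
    have hrest : Nat.card ↥(K : Set V)ᶜ ≤ m * (m + 3) / 2 := by
      rw [Nat.card_coe_set_eq, Set.ncard_compl, Set.ncard_coe_finset, hK.card_eq]
      omega
    obtain ⟨f, hf⟩ := ih (hG.induce _) hrest
    exact ⟨_, (hf.extend_isClique hK.isClique).comp_equiv (finSuccEquiv m).symm⟩

theorem stmt15_general {V : Type*} [Fintype V] (m : ℕ)
    (G : SimpleGraph V) (hperf : IsPerfect G)
    (hcard : Fintype.card V = m * (m + 3) / 2) :
    ∃ f : V → Fin m, ∀ c, G.IsClique {v | f v = c} ∨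
      (∀ x ∈ {v | f v = c}, ∀ y ∈ {v | f v = c}, ¬ G.Adj x y) := by
  obtain ⟨f, hf⟩ := hperf.exists_isCocoloring m (Nat.card_eq_fintype_card.trans hcard).le
  exact ⟨f, fun c => (hf c).imp_right fun hind x hx y hy hadj => hind hx hy hadj.ne hadj⟩

/-- For every `m ≥ 1`, every perfect graph on `m(m+3)/2` vertices admits a partition
of its vertex set into at most `m` parts, each a clique or an independent set. -/
theorem stmt15 {V : Type*} [Fintype V] (m : ℕ) (hm : 1 ≤ m)
    (G : SimpleGraph V) (hperf : IsPerfect G)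
    (hcard : Fintype.card V = m * (m + 3) / 2) :
    ∃ f : V → Fin m, ∀ c, G.IsClique {v | f v = c} ∨
      (∀ x ∈ {v | f v = c}, ∀ y ∈ {v | f v = c}, ¬ G.Adj x y) :=
  stmt15_general m G hperf hcard
end

section
/- Let G be a graph with no 1-dense 4-set and no induced cycle of length 4 or 5 (e.g., a perfect graph with no 1-dense 4-set). Let v be a vertex with distinct neighbors v1,…,v4. Then for i ≠ j there is no edge between N(v_i) \ N[v] and N(v_j) \ N[v], and each set N(v_i) \ N[v] is 1-sparse; consequently {v} ∪ ⋃_{i=1}^{4} (N(v_i) \ N[v]) is a 1-sparse set. -/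
/-- Four distinct vertices with at least five of the six possible edges form a
1-dense 4-set. -/
lemma dense4 {V : Type*} (G : SimpleGraph V)
    (hnd : ¬ ∃ S : Set V, kDense G 1 S ∧ S.ncard = 4)
    (a b c d : V) (hab : a ≠ b) (hac : a ≠ c) (had : a ≠ d) (hbc : b ≠ c)
    (hbd : b ≠ d) (hcd : c ≠ d)
    (e1 : G.Adj a b) (e2 : G.Adj a c) (e3 : G.Adj b c) (e4 : G.Adj b d)
    (e5 : G.Adj c d) : False := by
  apply hnd
  refine ⟨{a, b, c, d}, ?_, ?_⟩
  · intro u hu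
    rcases hu with rfl | rfl | rfl | rfl
    · refine le_trans (Set.ncard_le_ncard ?_ (Set.finite_singleton d)) (by simp)
      rintro x ⟨hxS, hxu, hxn⟩
      rcases hxS with rfl | rfl | rfl | rfl
      · exact absurd rfl hxu
      · exact absurd e1 hxn
      · exact absurd e2 hxn
      · rfl
    · refine le_trans (Set.ncard_le_ncard ?_ (Set.finite_singleton a)) (by simp)
      rintro x ⟨hxS, hxu, hxn⟩
      rcases hxS with rfl | rfl | rfl | rfl
      · rfl
      · exact absurd rfl hxu
      · exact absurd e3 hxn
      · exact absurd e4 hxn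
    · refine le_trans (Set.ncard_le_ncard ?_ (Set.finite_singleton a)) (by simp)
      rintro x ⟨hxS, hxu, hxn⟩
      rcases hxS with rfl | rfl | rfl | rfl
      · rfl
      · exact absurd e3.symm hxn
      · exact absurd rfl hxu
      · exact absurd e5 hxn
    · refine le_trans (Set.ncard_le_ncard ?_ (Set.finite_singleton a)) (by simp)
      rintro x ⟨hxS, hxu, hxn⟩
      rcases hxS with rfl | rfl | rfl | rfl
      · rfl
      · exact absurd e4.symm hxn
      · exact absurd e5.symm hxn
      · exact absurd rfl hxu
  · rw [Set.ncard_insert_of_notMem (by simp [hab, hac, had])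
        (((Set.finite_singleton d).insert c).insert b),
      Set.ncard_insert_of_notMem (by simp [hbc, hbd])
        ((Set.finite_singleton d).insert c),
      Set.ncard_insert_of_notMem (by simp [hcd]) (Set.finite_singleton d),
      Set.ncard_singleton]

/-- In a graph with no 1-dense 4-set, no induced `C₄` and no induced `C₅`, if `v`
has four distinct neighbors `w 0, …, w 3`, then there are no edges between
`N(w i) \ N[v]` and `N(w j) \ N[v]` for `i ≠ j`, each set `N(w i) \ N[v]` is
1-sparse, and `{v} ∪ ⋃ i, (N(w i) \ N[v])` is a 1-sparse set. -/
theorem stmt17 {V : Type*} [Fintype V] (G : SimpleGraph V)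
    (hnd : ¬ ∃ S : Set V, kDense G 1 S ∧ S.ncard = 4)
    (hC4 : ∀ a b c d : V, a ≠ b → a ≠ c → a ≠ d → b ≠ c → b ≠ d → c ≠ d →
      G.Adj a b → G.Adj b c → G.Adj c d → G.Adj d a →
      ¬ G.Adj a c → ¬ G.Adj b d → False)
    (hC5 : ∀ a b c d e : V, a ≠ b → a ≠ c → a ≠ d → a ≠ e → b ≠ c → b ≠ d → b ≠ e →
      c ≠ d → c ≠ e → d ≠ e →
      G.Adj a b → G.Adj b c → G.Adj c d → G.Adj d e → G.Adj e a →
      ¬ G.Adj a c → ¬ G.Adj a d → ¬ G.Adj b d → ¬ G.Adj b e → ¬ G.Adj c e → False)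
    (v : V) (w : Fin 4 → V) (hinj : Function.Injective w) (hadj : ∀ i, G.Adj v (w i)) :
    (∀ i j, i ≠ j → ∀ x ∈ G.neighborSet (w i) \ (G.neighborSet v ∪ {v}),
      ∀ y ∈ G.neighborSet (w j) \ (G.neighborSet v ∪ {v}), ¬ G.Adj x y) ∧
    (∀ i, kSparse G 1 (G.neighborSet (w i) \ (G.neighborSet v ∪ {v}))) ∧
    kSparse G 1 ({v} ∪ ⋃ i, (G.neighborSet (w i) \ (G.neighborSet v ∪ {v}))) := by
  classical
  have hmem : ∀ (i : Fin 4) (x : V),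
      x ∈ G.neighborSet (w i) \ (G.neighborSet v ∪ {v}) →
      G.Adj (w i) x ∧ ¬ G.Adj v x ∧ x ≠ v :=
    fun i x hx => ⟨hx.1, fun h => hx.2 (Or.inl h), fun h => hx.2 (Or.inr h)⟩
  have key : ∀ i j : Fin 4, w i ≠ w j → ∀ x,
      x ∈ G.neighborSet (w i) \ (G.neighborSet v ∪ {v}) → ¬ G.Adj (w j) x := by
    intro i j hw x hx hadjx
    obtain ⟨h1, h2, h3⟩ := hmem i x hx
    have hxwi : x ≠ w i := fun e => h2 (e ▸ hadj i)
    have hxwj : x ≠ w j := fun e => h2 (e ▸ hadj j)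
    by_cases hij : G.Adj (w i) (w j)
    · exact dense4 G hnd v (w i) (w j) x (hadj i).ne (hadj j).ne h3.symm hw
        hxwi.symm hxwj.symm (hadj i) (hadj j) hij h1 hadjx
    · exact hC4 v (w i) x (w j) (hadj i).ne h3.symm (hadj j).ne hxwi.symm hw hxwj
        (hadj i) h1 hadjx.symm (hadj j).symm h2 hij
  have claimA : ∀ i j, i ≠ j →
      ∀ x ∈ G.neighborSet (w i) \ (G.neighborSet v ∪ {v}),
      ∀ y ∈ G.neighborSet (w j) \ (G.neighborSet v ∪ {v}), ¬ G.Adj x y := by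
    intro i j hij x hx y hy hxy
    have hw : w i ≠ w j := fun e => hij (hinj e)
    obtain ⟨hx1, hx2, hx3⟩ := hmem i x hx
    obtain ⟨hy1, hy2, hy3⟩ := hmem j y hy
    have hxwi : x ≠ w i := fun e => hx2 (e ▸ hadj i)
    have hxwj : x ≠ w j := fun e => hx2 (e ▸ hadj j)
    have hywi : y ≠ w i := fun e => hy2 (e ▸ hadj i)
    have hywj : y ≠ w j := fun e => hy2 (e ▸ hadj j)
    have k1 : ¬ G.Adj (w j) x := key i j hw x hx
    have k2 : ¬ G.Adj (w i) y := key j i hw.symm y hy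
    by_cases hij' : G.Adj (w i) (w j)
    · exact hC4 x (w i) (w j) y hxwi hxwj hxy.ne hw hywi.symm hywj.symm
        hx1.symm hij' hy1 hxy.symm (fun h => k1 h.symm) k2
    · exact hC5 x (w i) v (w j) y hxwi hx3 hxwj hxy.ne (hadj i).ne' hw
        hywi.symm (hadj j).ne hy3.symm hywj.symm
        hx1.symm (hadj i).symm (hadj j) hy1 hxy.symm
        (fun h => hx2 h.symm) (fun h => k1 h.symm) hij' k2 hy2
  have claimB : ∀ i, kSparse G 1 (G.neighborSet (w i) \ (G.neighborSet v ∪ {v})) := by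
    intro i x hx
    by_contra h
    push_neg at h
    rw [Set.one_lt_ncard_iff (Set.toFinite _)] at h
    obtain ⟨y, z, ⟨hyS, hxy⟩, ⟨hzS, hxz⟩, hyz⟩ := h
    obtain ⟨hy1, _, _⟩ := hmem i y hyS
    obtain ⟨hz1, _, _⟩ := hmem i z hzS
    have hx1 := (hmem i x hx).1
    exact dense4 G hnd y (w i) x z hy1.ne' hxy.ne' hyz hx1.ne hz1.ne hxz.ne
      hy1.symm hxy.symm hx1 hz1 hxz
  refine ⟨claimA, claimB, ?_⟩
  intro u hu
  rcases hu with hu | hu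
  · have heq : {y | y ∈ ({v} ∪ ⋃ i, (G.neighborSet (w i) \ (G.neighborSet v ∪ {v})) : Set V)
        ∧ G.Adj u y} = ∅ := by
      rw [Set.eq_empty_iff_forall_notMem]
      rintro y ⟨hyT, hady⟩
      have huv : u = v := hu
      rw [huv] at hady
      rcases hyT with hy | hy
      · have hyv : y = v := hy
        rw [hyv] at hady
        exact G.irrefl hady
      · obtain ⟨s, ⟨i, rfl⟩, hyi⟩ := hy
        exact (hmem i y hyi).2.1 hady
    rw [heq]
    simp
  · obtain ⟨s, ⟨i, rfl⟩, hui⟩ := hu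
    have hsub : {y | y ∈ ({v} ∪ ⋃ i, (G.neighborSet (w i) \ (G.neighborSet v ∪ {v})) : Set V)
        ∧ G.Adj u y} ⊆
        {y | y ∈ G.neighborSet (w i) \ (G.neighborSet v ∪ {v}) ∧ G.Adj u y} := by
      rintro y ⟨hyT, hady⟩
      refine ⟨?_, hady⟩
      rcases hyT with hy | hy
      · have hyv : y = v := hy
        subst hyv
        exact absurd hady.symm (hmem i u hui).2.1
      · obtain ⟨s, ⟨j, rfl⟩, hyj⟩ := hy
        by_cases hji : j = i
        · exact hji ▸ hyj
        · exact absurd hady (claimA i j (Ne.symm hji) u hui y hyj)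
    exact le_trans (Set.ncard_le_ncard hsub (Set.toFinite _)) (claimB i u hui)
end

section
/- For every j ≥ 3 there exists a chordal graph on 2j−3 vertices with no 1-dense 4-set and no 1-sparse j-set (a chain of j−2 triangles sharing vertices consecutively, with a pendant vertex attached at each end). Consequently R_1^{CH}(4,j) ≥ 2j−2. -/
/-- A graph is chordal if every cycle of length at least 4 (given as an injective
cyclic sequence of pairwise adjacent consecutive vertices) has a chord. -/
def IsChordal {V : Type*} (G : SimpleGraph V) : Prop :=
  ∀ n : ℕ, 4 ≤ n → ∀ f : ZMod n → V, Function.Injective f →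
    (∀ i, G.Adj (f i) (f (i + 1))) →
    ∃ i j : ZMod n, i ≠ j ∧ j ≠ i + 1 ∧ i ≠ j + 1 ∧ G.Adj (f i) (f j)

open Function

section General

variable {V W : Type*}

theorem isChordal_of_lt_adj [LinearOrder V] (G : SimpleGraph V)
    (hlower : ∀ ⦃u v w⦄, u < w → v < w → G.Adj u w → G.Adj v w → u ≠ v → G.Adj u v) :
    IsChordal G := by
  intro n hn f hf hadj
  have : NeZero n := ⟨by omega⟩
  have hcast : ∀ k : ℕ, 0 < k → k < n → (k : ZMod n) ≠ 0 := fun k hk hkn hzero =>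
    absurd (Nat.le_of_dvd hk ((ZMod.natCast_eq_zero_iff k n).1 hzero)) (by omega)
  have h1 := hcast 1 (by omega) (by omega)
  have h2 := hcast 2 (by omega) (by omega)
  have h3 := hcast 3 (by omega) (by omega)
  push_cast at h1 h2 h3
  -- the cycle's two neighbours of its maximal vertex are joined by a chord
  obtain ⟨i, hi⟩ := Finite.exists_max f
  have hprev : f (i - 1) ≠ f i := hf.ne fun heq => h1 (by linear_combination -heq)
  have hnext : f (i + 1) ≠ f i := hf.ne fun heq => h1 (by linear_combination heq)
  have hpn : i - 1 ≠ i + 1 := fun heq => h2 (by linear_combination -heq)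
  refine ⟨i - 1, i + 1, hpn, fun heq => h1 (by linear_combination heq),
    fun heq => h3 (by linear_combination -heq),
    hlower ((hi _).lt_of_ne hprev) ((hi _).lt_of_ne hnext)
      (by simpa using hadj (i - 1)) (hadj i).symm (hf.ne hpn)⟩

theorem IsChordal.comap {G : SimpleGraph W} (hG : IsChordal G) {f : V → W} (hf : Injective f) :
    IsChordal (G.comap f) :=
  fun n hn g hg hadj => hG n hn (f ∘ g) (hf.comp hg) hadj

theorem kDense.image_of_comap {G : SimpleGraph W} {f : V → W} (hf : Injective f) {k : ℕ}
    {S : Set V} (hS : kDense (G.comap f) k S) : kDense G k (f '' S) := by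
  rintro _ ⟨v, hv, rfl⟩
  have : {u | u ∈ f '' S ∧ u ≠ f v ∧ ¬G.Adj (f v) u} =
      f '' {u | u ∈ S ∧ u ≠ v ∧ ¬(G.comap f).Adj v u} := by
    ext; simp only [Set.mem_image, Set.mem_ofPred_eq, SimpleGraph.comap_adj]; grind
  rw [this, Set.ncard_image_of_injective _ hf]
  exact hS v hv

theorem kSparse.image_of_comap {G : SimpleGraph W} {f : V → W} (hf : Injective f) {k : ℕ}
    {S : Set V} (hS : kSparse (G.comap f) k S) : kSparse G k (f '' S) := by
  rintro _ ⟨v, hv, rfl⟩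
  have : {u | u ∈ f '' S ∧ G.Adj (f v) u} = f '' {u | u ∈ S ∧ (G.comap f).Adj v u} := by
    ext; simp only [Set.mem_image, Set.mem_ofPred_eq, SimpleGraph.comap_adj]; grind
  rw [this, Set.ncard_image_of_injective _ hf]
  exact hS v hv

theorem kDense.ncard_le_add_ncard_adj {G : SimpleGraph V} {k : ℕ} {S : Set V}
    (hS : kDense G k S) (hfin : S.Finite) {v : V} (hv : v ∈ S) :
    S.ncard ≤ 1 + k + {u | u ∈ S ∧ G.Adj v u}.ncard := by
  have hcover : S ⊆ {v} ∪ {u | u ∈ S ∧ u ≠ v ∧ ¬G.Adj v u} ∪ {u | u ∈ S ∧ G.Adj v u} := by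
    intro u hu
    by_cases huv : u = v
    · exact Or.inl (Or.inl huv)
    · by_cases hadj : G.Adj v u
      · exact Or.inr ⟨hu, hadj⟩
      · exact Or.inl (Or.inr ⟨hu, huv, hadj⟩)
  calc S.ncard
      ≤ ({v} ∪ {u | u ∈ S ∧ u ≠ v ∧ ¬G.Adj v u} ∪ {u | u ∈ S ∧ G.Adj v u}).ncard :=
        Set.ncard_le_ncard hcover (((Set.finite_singleton v).union
          (hfin.subset fun _ hu => hu.1)).union (hfin.subset fun _ hu => hu.1))
    _ ≤ ({v} : Set V).ncard + {u | u ∈ S ∧ u ≠ v ∧ ¬G.Adj v u}.ncard +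
          {u | u ∈ S ∧ G.Adj v u}.ncard :=
        (Set.ncard_union_le _ _).trans (Nat.add_le_add_right (Set.ncard_union_le _ _) _)
    _ ≤ 1 + k + {u | u ∈ S ∧ G.Adj v u}.ncard := by
        rw [Set.ncard_singleton]; have := hS v hv; omega

theorem kSparse.eq_of_adj {G : SimpleGraph V} {S : Set V} (hS : kSparse G 1 S) (hfin : S.Finite)
    {v a b : V} (hv : v ∈ S) (ha : a ∈ S) (hb : b ∈ S) (hva : G.Adj v a) (hvb : G.Adj v b) :
    a = b :=
  (Set.ncard_le_one_iff (hfin.subset fun _ hu => hu.1)).1 (hS v hv) ⟨ha, hva⟩ ⟨hb, hvb⟩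

end General

/-- Triangles `{2k - 1, 2k, 2k + 1}` (`k ≥ 1`) glued at their odd vertices, with `0` pendant at `1`.
Its restriction to `{0, …, 2j - 4}` ends with the pendant vertex `2j - 4` at `2j - 5`. -/
def triangleChain : SimpleGraph ℕ :=
  SimpleGraph.fromRel fun a b => b = a + 1 ∨ (b = a + 2 ∧ a % 2 = 1)

theorem triangleChain_adj {a b : ℕ} :
    triangleChain.Adj a b ↔
      b = a + 1 ∨ a = b + 1 ∨ (b = a + 2 ∧ a % 2 = 1) ∨ (a = b + 2 ∧ b % 2 = 1) := by
  simp only [triangleChain, SimpleGraph.fromRel_adj]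
  omega

theorem isChordal_triangleChain : IsChordal triangleChain :=
  isChordal_of_lt_adj _ fun u v w => by simp only [triangleChain_adj]; omega

theorem ncard_ne_four_of_kDense_triangleChain {S : Set ℕ} (hS : kDense triangleChain 1 S) :
    S.ncard ≠ 4 := by
  intro h4
  have hfin : S.Finite := Set.finite_of_ncard_ne_zero (by omega)
  obtain ⟨m, hm, hmax⟩ := Set.exists_max_image S id hfin (Set.nonempty_of_ncard_ne_zero (by omega))
  have hnbrs : 1 < {u | u ∈ S ∧ triangleChain.Adj m u}.ncard := by
    have := hS.ncard_le_add_ncard_adj hfin hm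
    omega
  obtain ⟨a, b, ⟨ha, hma⟩, ⟨hb, hmb⟩, hab⟩ :=
    (Set.one_lt_ncard_iff (hfin.subset fun _ hu => hu.1)).1 hnbrs
  have hthree : (↑({m, a, b} : Finset ℕ) : Set ℕ).ncard < S.ncard := by
    rw [Set.ncard_coe_finset]
    have := Finset.card_le_three (a := m) (b := a) (c := b)
    omega
  obtain ⟨x, hx, hxmab⟩ := Set.exists_mem_notMem_of_ncard_lt_ncard hthree
  simp only [Finset.coe_insert, Finset.coe_singleton, Set.mem_insert_iff, Set.mem_singleton_iff,
    not_or] at hxmab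
  have ham := hmax a ha
  have hbm := hmax b hb
  have hxm := hmax x hx
  simp only [id, triangleChain_adj] at hma hmb ham hbm hxm
  -- the two neighbours of `m` below it are `m - 1` and `m - 2`; both `m` and `m - 1` miss `x`
  have hm1 : m - 1 ∈ S := by
    rcases (by omega : a = m - 1 ∨ b = m - 1) with rfl | rfl <;> assumption
  have hmiss : 1 < {u | u ∈ S ∧ u ≠ x ∧ ¬triangleChain.Adj x u}.ncard :=
    (Set.one_lt_ncard_iff (hfin.subset fun _ hu => hu.1)).2
      ⟨m, m - 1, ⟨hm, by omega, by rw [triangleChain_adj]; omega⟩,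
        ⟨hm1, by omega, by rw [triangleChain_adj]; omega⟩, by omega⟩
  have := hS x hx
  omega

theorem ncard_le_of_kSparse_triangleChain {S : Set ℕ} {n : ℕ} (hS : kSparse triangleChain 1 S)
    (hn : S ⊆ Set.Iio n) : S.ncard ≤ n / 2 + 1 := by
  classical
  have hfin : S.Finite := (Set.finite_Iio n).subset hn
  -- `v ↦ ⌈v / 2⌉` injects `S` except on edges `{2k - 1, 2k}` inside `S`; then the block `k - 1`
  -- misses `S`, and `2k - 1` is sent there instead
  let φ : ℕ → ℕ := fun v => if v % 2 = 1 ∧ v + 1 ∈ S then v / 2 else (v + 1) / 2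
  have hmaps : ∀ v ∈ S, φ v ∈ Set.Iio (n / 2 + 1) := by
    intro v hv
    have := hn hv
    simp only [φ, Set.mem_Iio] at this ⊢
    split_ifs <;> omega
  have hinj : Set.InjOn φ S := by
    intro u hu v hv huv
    by_contra hne
    simp only [φ] at huv
    split_ifs at huv with hu' hv' hv'
    · omega
    · have := hS.eq_of_adj hfin hu hu'.2 hv (by rw [triangleChain_adj]; omega)
        (by rw [triangleChain_adj]; omega)
      omega
    · have := hS.eq_of_adj hfin hv hv'.2 hu (by rw [triangleChain_adj]; omega)
        (by rw [triangleChain_adj]; omega)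
      omega
    · rcases (by omega : v = u + 1 ∧ u % 2 = 1 ∨ u = v + 1 ∧ v % 2 = 1) with
        ⟨rfl, hodd⟩ | ⟨rfl, hodd⟩
      · exact hu' ⟨hodd, hv⟩
      · exact hv' ⟨hodd, hu⟩
  calc S.ncard ≤ (Set.Iio (n / 2 + 1)).ncard := Set.ncard_le_ncard_of_injOn φ hmaps hinj
    _ = n / 2 + 1 := Set.ncard_Iio_nat _

section UpperBound

variable {V : Type*} {G : SimpleGraph V}

theorem kDense_and_ncard_eq_four_of_common_adj {u v x y : V} (huv : G.Adj u v) (hux : G.Adj u x)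
    (hvx : G.Adj v x) (huy : G.Adj u y) (hvy : G.Adj v y) (hxy : x ≠ y) :
    kDense G 1 {u, v, x, y} ∧ ({u, v, x, y} : Set V).ncard = 4 := by
  refine ⟨fun _ hw => (Set.ncard_le_one_iff (Set.toFinite _)).2 fun {a b} ha hb => ?_, ?_⟩
  · simp only [Set.mem_insert_iff, Set.mem_singleton_iff, Set.mem_ofPred_eq] at hw ha hb
    rcases hw with rfl | rfl | rfl | rfl <;>
      rcases ha with ⟨rfl | rfl | rfl | rfl, ha, ha'⟩ <;>
      rcases hb with ⟨rfl | rfl | rfl | rfl, hb, hb'⟩ <;>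
      simp_all [G.adj_comm]
  · rw [Set.ncard_insert_of_notMem (by simp [huv.ne, hux.ne, huy.ne]),
      Set.ncard_insert_of_notMem (by simp [hvx.ne, hvy.ne]),
      Set.ncard_pair hxy]

theorem kSparse_of_subset_neighborSet
    (hdiamond : ∀ ⦃u v x y⦄, G.Adj u v → G.Adj u x → G.Adj v x → G.Adj u y → G.Adj v y → x = y)
    {v : V} {S : Set V} (hS : S ⊆ G.neighborSet v) (hfin : S.Finite) : kSparse G 1 S :=
  fun _ hw => (Set.ncard_le_one_iff (hfin.subset fun _ hu => hu.1)).2 fun ha hb =>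
    hdiamond (hS hw) (hS ha.1) ha.2 (hS hb.1) hb.2

theorem kSparse_of_isIndepSet {S : Set V} (hS : G.IsIndepSet S) (k : ℕ) : kSparse G k S := by
  intro v hv
  rw [show {u | u ∈ S ∧ G.Adj v u} = ∅ from
    Set.eq_empty_of_forall_notMem fun u hu => hS hv hu.1 hu.2.ne hu.2, Set.ncard_empty]
  exact Nat.zero_le k

theorem exists_isIndepSet_of_degree_le [Fintype V] [DecidableEq V] [DecidableRel G.Adj] {d : ℕ}
    (hd : ∀ v, G.degree v ≤ d) :
    ∀ (m : ℕ) (s : Finset V), m * (d + 1) ≤ s.card →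
      ∃ t ⊆ s, t.card = m ∧ G.IsIndepSet (t : Set V)
  | 0, _, _ => ⟨∅, by simp⟩
  | m + 1, s, hs => by
    obtain ⟨v, hv⟩ : s.Nonempty := Finset.card_pos.1 (by nlinarith)
    have hclosed : (insert v (G.neighborFinset v)).card ≤ d + 1 := by
      have := Finset.card_insert_le v (G.neighborFinset v)
      have := hd v
      rw [G.card_neighborFinset_eq_degree] at *
      omega
    obtain ⟨t, hts, htc, ht⟩ := exists_isIndepSet_of_degree_le hd m
      (s \ insert v (G.neighborFinset v))
      (by have := Finset.le_card_sdiff (insert v (G.neighborFinset v)) s; rw [add_mul] at hs; omega)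
    have hvt : ∀ b ∈ t, b ≠ v ∧ ¬G.Adj v b := fun b hb => by
      simpa [not_or] using (Finset.mem_sdiff.1 (hts hb)).2
    refine ⟨insert v t, Finset.insert_subset hv (hts.trans Finset.sdiff_subset), ?_, ?_⟩
    · rw [Finset.card_insert_of_notMem fun h => (hvt v h).1 rfl, htc]
    · rw [Finset.coe_insert]
      exact ht.insert fun b hb _ => ⟨(hvt b hb).2, fun h => (hvt b hb).2 h.symm⟩

theorem exists_kDense_or_kSparse_of_le_card [Fintype V] (G : SimpleGraph V) (j : ℕ)
    (hV : j * j ≤ Fintype.card V) :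
    ∃ S : Set V, (kDense G 1 S ∧ S.ncard = 4) ∨ (kSparse G 1 S ∧ S.ncard = j) := by
  classical
  by_cases hdiamond : ∃ u v x y, G.Adj u v ∧ G.Adj u x ∧ G.Adj v x ∧ G.Adj u y ∧ G.Adj v y ∧ x ≠ y
  · obtain ⟨u, v, x, y, huv, hux, hvx, huy, hvy, hxy⟩ := hdiamond
    exact ⟨_, Or.inl (kDense_and_ncard_eq_four_of_common_adj huv hux hvx huy hvy hxy)⟩
  push Not at hdiamond
  by_cases hdeg : ∃ v, j ≤ G.degree v
  · obtain ⟨v, hv⟩ := hdeg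
    obtain ⟨t, hts, htc⟩ := Finset.exists_subset_card_eq (G.card_neighborFinset_eq_degree v ▸ hv)
    refine ⟨t, Or.inr ⟨kSparse_of_subset_neighborSet hdiamond (v := v) ?_ t.finite_toSet, by simpa⟩⟩
    exact fun u hu => (G.mem_neighborFinset v u).1 (hts hu)
  · push Not at hdeg
    obtain ⟨t, -, htc, ht⟩ := exists_isIndepSet_of_degree_le (G := G) (d := j - 1)
      (fun v => by have := hdeg v; omega) j Finset.univ
      (by rcases Nat.eq_zero_or_pos j with rfl | hj
          · simp
          · rwa [Nat.sub_add_cancel hj, Finset.card_univ])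
    exact ⟨t, Or.inr ⟨kSparse_of_isIndepSet ht 1, by simpa⟩⟩

end UpperBound

def chainGraph (n : ℕ) : SimpleGraph (Fin n) :=
  triangleChain.comap Fin.val

theorem isChordal_chainGraph (n : ℕ) : IsChordal (chainGraph n) :=
  isChordal_triangleChain.comap Fin.val_injective

theorem ncard_ne_four_of_kDense_chainGraph {n : ℕ} {S : Set (Fin n)}
    (hS : kDense (chainGraph n) 1 S) : S.ncard ≠ 4 := by
  rw [← Set.ncard_image_of_injective S Fin.val_injective]
  exact ncard_ne_four_of_kDense_triangleChain (hS.image_of_comap Fin.val_injective)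

theorem ncard_le_of_kSparse_chainGraph {n : ℕ} {S : Set (Fin n)}
    (hS : kSparse (chainGraph n) 1 S) : S.ncard ≤ n / 2 + 1 := by
  rw [← Set.ncard_image_of_injective S Fin.val_injective]
  exact ncard_le_of_kSparse_triangleChain (hS.image_of_comap Fin.val_injective)
    (by rintro _ ⟨v, -, rfl⟩; exact v.isLt)

/-- For every `j ≥ 3` there is a chordal graph on `2j - 3` vertices with no 1-dense
4-set and no 1-sparse `j`-set; consequently the defective Ramsey number
`R_1^{CH}(4, j)` is at least `2j - 2`. -/
theorem stmt19 (j : ℕ) (hj : 3 ≤ j) :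
    (∃ G : SimpleGraph (Fin (2 * j - 3)), IsChordal G ∧
      (¬ ∃ S : Set (Fin (2 * j - 3)), kDense G 1 S ∧ S.ncard = 4) ∧
      (¬ ∃ S : Set (Fin (2 * j - 3)), kSparse G 1 S ∧ S.ncard = j)) ∧
    2 * j - 2 ≤ sInf {n : ℕ | ∀ G : SimpleGraph (Fin n), IsChordal G →
      ∃ S : Set (Fin n), (kDense G 1 S ∧ S.ncard = 4) ∨ (kSparse G 1 S ∧ S.ncard = j)} := by
  refine ⟨⟨chainGraph _, isChordal_chainGraph _,
      fun ⟨S, hS, hS4⟩ => ncard_ne_four_of_kDense_chainGraph hS hS4,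
      fun ⟨S, hS, hSj⟩ => by have := ncard_le_of_kSparse_chainGraph hS; omega⟩,
    le_csInf ⟨j * j, fun G _ => exists_kDense_or_kSparse_of_le_card G j (by simp)⟩
      fun n hn => ?_⟩
  by_contra! hn_lt
  obtain ⟨S, ⟨hS, hS4⟩ | ⟨hS, hSj⟩⟩ := hn _ (isChordal_chainGraph n)
  · exact ncard_ne_four_of_kDense_chainGraph hS hS4
  · have := ncard_le_of_kSparse_chainGraph hS
    omega
end
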